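/- arXiv:1805.09685 — 4 statements merged into one kernel-verified Lean document; each statement's English description precedes it below -/
import Mathlib

section
/- Let ω be a weight function with (ω_5) and γ((ω⋆)^ι) > 1. Then ∫_{−∞}^{+∞} ω⋆(|t|)/(1+t²) dt < +∞. -/
open Filter MeasureTheory Set Asymptotics

noncomputable section

/-- A *weight function*: continuous and nondecreasing on `[0,∞)`, vanishing at `0`,
and tending to `+∞` at `+∞`. -/
structure IsWeightFunction (ω : ℝ → ℝ) : Prop where
  continuousOn : ContinuousOn ω (Set.Ici 0)
  monotoneOn : MonotoneOn ω (Set.Ici 0)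
  map_zero : ω 0 = 0
  tendsto_atTop : Filter.Tendsto ω Filter.atTop Filter.atTop

/-- Condition `(P_{ω,γ})`: there is `K > 1` with `limsup_{t→∞} ω(K^γ t)/ω(t) < K`,
expressed through an eventual bound by some `c < K`. -/
def Pcond (ω : ℝ → ℝ) (γ : ℝ) : Prop :=
  ∃ K : ℝ, 1 < K ∧ ∃ c : ℝ, c < K ∧ ∀ᶠ t : ℝ in Filter.atTop, ω (K ^ γ * t) / ω t ≤ c

/-- The growth index `γ(ω) ∈ [0,+∞]`, with `sup ∅ = 0`. -/
noncomputable def gammaIndex (ω : ℝ → ℝ) : ENNReal :=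
  ⨆ γ ∈ {γ : ℝ | 0 < γ ∧ Pcond ω γ}, ENNReal.ofReal γ

/-- Condition `(ω₁)`. -/
def Omega1 (ω : ℝ → ℝ) : Prop :=
  ∃ L : ℝ, 1 ≤ L ∧ ∀ t : ℝ, 0 ≤ t → ω (2 * t) ≤ L * (ω t + 1)

/-- Condition `(ω₃)`: `log t = o(ω t)` as `t → ∞`. -/
def Omega3 (ω : ℝ → ℝ) : Prop :=
  (fun t : ℝ => Real.log t) =o[Filter.atTop] ω

/-- Condition `(ω₄)`: `t ↦ ω (exp t)` is convex on `ℝ`. -/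
def Omega4 (ω : ℝ → ℝ) : Prop :=
  ConvexOn ℝ Set.univ (fun t : ℝ => ω (Real.exp t))

/-- Condition `(ω₅)`: `ω t = o(t)` as `t → ∞`. -/
def Omega5 (ω : ℝ → ℝ) : Prop :=
  ω =o[Filter.atTop] (fun t : ℝ => t)

/-- Condition `(ω_snq)`. -/
def OmegaSnq (ω : ℝ → ℝ) : Prop :=
  ∃ C : ℝ, 0 < C ∧ ∀ y : ℝ, 0 < y →
    (∫⁻ t in Set.Ioi (1:ℝ), ENNReal.ofReal (ω (y * t) / t ^ 2)) ≤
      ENNReal.ofReal (C * (ω y + 1))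

/-- `ω ∈ W₀`: normalized weight function with `(ω₃)` and `(ω₄)`. -/
def InW0 (ω : ℝ → ℝ) : Prop :=
  IsWeightFunction ω ∧ (∀ t ∈ Set.Icc (0:ℝ) 1, ω t = 0) ∧ Omega3 ω ∧ Omega4 ω

/-- The Legendre–Fenchel–Young conjugate `φ*_ω(x) = sup {x y − ω(e^y) : y ≥ 0}`. -/
noncomputable def phiStar (ω : ℝ → ℝ) (x : ℝ) : ℝ :=
  sSup ((fun y : ℝ => x * y - ω (Real.exp y)) '' Set.Ici 0)

/-- The associated weight matrix `W^l_j = exp((1/l) φ*_ω(l j))`. -/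
noncomputable def Wseq (ω : ℝ → ℝ) (l : ℝ) (j : ℕ) : ℝ :=
  Real.exp ((1 / l) * phiStar ω (l * (j : ℝ)))

/-- `w^l_j = W^l_j / j!`. -/
noncomputable def wseq (ω : ℝ → ℝ) (l : ℝ) (j : ℕ) : ℝ :=
  Wseq ω l j / (Nat.factorial j : ℝ)

/-- `h_M(t) = inf_{k ∈ ℕ} M_k t^k`. -/
noncomputable def hFun (M : ℕ → ℝ) (t : ℝ) : ℝ :=
  ⨅ k : ℕ, M k * t ^ k

/-- The associated function `ω_M(t) = sup_p log (t^p / M_p)` for `t > 0`, `ω_M(0) = 0`. -/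
noncomputable def assocWeight (M : ℕ → ℝ) (t : ℝ) : ℝ :=
  if t ≤ 0 then 0 else ⨆ p : ℕ, Real.log (t ^ p / M p)

/-- The upper Legendre conjugate `ω⋆(s) = sup_{t ≥ 0} (ω(t) − s t)`. -/
noncomputable def upperConj (ω : ℝ → ℝ) (s : ℝ) : ℝ :=
  sSup ((fun t : ℝ => ω t - s * t) '' Set.Ici 0)

/-- `(ω⋆)^ι(t) = ω⋆(1/t)` for `t > 0`, with value `0` at `t = 0`. -/
noncomputable def upperConjIota (ω : ℝ → ℝ) (t : ℝ) : ℝ :=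
  if t = 0 then 0 else upperConj ω (1 / t)

/-- The lower Legendre conjugate `(ω^ι)_⋆(t) = inf_{s > 0} (ω(1/s) + t s)`. -/
noncomputable def lowerConjIota (ω : ℝ → ℝ) (t : ℝ) : ℝ :=
  sInf ((fun s : ℝ => ω (1 / s) + t * s) '' Set.Ioi 0)

/-- The unbounded sector `S_γ ⊆ ℂ` of opening `γ π` bisected by direction `0`
(for `0 < γ < 2` it lies in `ℂ`). -/
def sector (γ : ℝ) : Set ℂ :=
  {z : ℂ | z ≠ 0 ∧ |Complex.arg z| < γ * Real.pi / 2}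

/-- `M ∈ LC`: positive, normalized, log-convex, `(M_p)^{1/p} → ∞`. -/
def LCseq (M : ℕ → ℝ) : Prop :=
  (∀ p, 0 < M p) ∧ M 0 = 1 ∧ M 0 ≤ M 1 ∧
  (∀ j : ℕ, 1 ≤ j → M j ^ 2 ≤ M (j - 1) * M (j + 1)) ∧
  Filter.Tendsto (fun p : ℕ => M p ^ ((1 : ℝ) / (p : ℝ))) Filter.atTop Filter.atTop

/-- The partial derivative `∂_i` of a function on `ℝ^d`. -/
noncomputable def partialDeriv {d : ℕ} (i : Fin d)
    (f : EuclideanSpace ℝ (Fin d) → ℂ) : EuclideanSpace ℝ (Fin d) → ℂ :=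
  fun x => fderiv ℝ f x (EuclideanSpace.single i 1)

/-- The iterated partial derivative `∂^j` for a multiindex `j ∈ ℕ^d`. -/
noncomputable def multiDeriv {d : ℕ} (j : Fin d → ℕ)
    (f : EuclideanSpace ℝ (Fin d) → ℂ) : EuclideanSpace ℝ (Fin d) → ℂ :=
  (List.finRange d).foldr (fun i g => (partialDeriv i)^[j i] g) f

end

/-!
Write `σ = (ω⋆)^ι`. Condition `(P_{σ,γ})` gives `K > 1` with `σ (K ^ γ * t) ≤ K * σ t` for large
`t`; iterating along the geometric sequence `K ^ (γ n)` and using that `σ` is nondecreasing yields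
`σ t = O(t ^ γ⁻¹)`, i.e. `ω⋆ s = O(s ^ (-γ⁻¹))` as `s → 0⁺`. For `γ > 1` this singularity is
integrable, and away from `0` the nonincreasing function `ω⋆` is bounded, so the Poisson weight
`1 / (1 + t ^ 2)` makes the whole integral finite.
-/

open Topology

theorem MonotoneOn.le_mul_rpow_of_map_mul_le {σ : ℝ → ℝ} {Q α T : ℝ}
    (hmono : MonotoneOn σ (Ici T)) (hQ : 1 < Q) (hα : 0 ≤ α) (hT : 0 < T)
    (hscale : ∀ t, T ≤ t → σ (Q * t) ≤ Q ^ α * σ t) {t : ℝ} (ht : T ≤ t) :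
    σ t ≤ (Q / T) ^ α * max (σ T) 0 * t ^ α := by
  set M := max (σ T) 0
  have hQ0 : 0 ≤ Q := by linarith
  have hiter : ∀ n : ℕ, σ (Q ^ n * T) ≤ (Q ^ n) ^ α * M := by
    intro n
    induction n with
    | zero => simp [M]
    | succ n ih =>
      have hTn : T ≤ Q ^ n * T := le_mul_of_one_le_left hT.le (one_le_pow₀ hQ.le)
      calc σ (Q ^ (n + 1) * T) = σ (Q * (Q ^ n * T)) := by ring_nf
        _ ≤ Q ^ α * σ (Q ^ n * T) := hscale _ hTn
        _ ≤ Q ^ α * ((Q ^ n) ^ α * M) := by gcongr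
        _ = (Q ^ (n + 1)) ^ α * M := by
          rw [pow_succ', Real.mul_rpow hQ0 (by positivity)]; ring
  obtain ⟨n, hn, hn1⟩ := exists_nat_pow_near ((one_le_div hT).2 ht) hQ
  have htn : t ≤ Q ^ (n + 1) * T := (div_le_iff₀ hT).1 hn1.le
  have hnt : Q ^ (n + 1) ≤ Q / T * t := by
    rw [pow_succ', div_mul_eq_mul_div, mul_div_assoc]
    gcongr
  calc σ t ≤ σ (Q ^ (n + 1) * T) := hmono ht (ht.trans htn) htn
    _ ≤ (Q ^ (n + 1)) ^ α * M := hiter (n + 1)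
    _ ≤ (Q / T * t) ^ α * M := by gcongr
    _ = (Q / T) ^ α * M * t ^ α := by
      rw [Real.mul_rpow (by positivity) (by linarith)]; ring

theorem Pcond.isBigO_rpow_inv {σ : ℝ → ℝ} {γ : ℝ} (hP : Pcond σ γ) (hγ : 0 < γ)
    (hpos : ∀ᶠ t in atTop, 0 < σ t) (hmono : MonotoneOn σ (Ioi 0)) :
    σ =O[atTop] fun t => t ^ γ⁻¹ := by
  obtain ⟨K, hK, c, hcK, hev⟩ := hP
  obtain ⟨T, hT⟩ := eventually_atTop.1 (hev.and hpos)
  set T₁ := max T 1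
  have hT₁ : 0 < T₁ := lt_max_of_lt_right one_pos
  have hscale : ∀ t, T₁ ≤ t → σ (K ^ γ * t) ≤ (K ^ γ) ^ γ⁻¹ * σ t := by
    intro t ht
    obtain ⟨hratio, hσt⟩ := hT t ((le_max_left T 1).trans ht)
    rw [Real.rpow_rpow_inv (by linarith) hγ.ne']
    calc σ (K ^ γ * t) ≤ c * σ t := (div_le_iff₀ hσt).1 hratio
      _ ≤ K * σ t := by gcongr
  refine IsBigO.of_bound ((K ^ γ / T₁) ^ γ⁻¹ * max (σ T₁) 0) ?_
  filter_upwards [eventually_ge_atTop T₁] with t ht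
  have hσt : 0 < σ t := (hT t ((le_max_left T 1).trans ht)).2
  rw [Real.norm_of_nonneg hσt.le, Real.norm_of_nonneg (Real.rpow_nonneg (hT₁.le.trans ht) _)]
  exact (hmono.mono fun x hx => hT₁.trans_le hx).le_mul_rpow_of_map_mul_le
    (Real.one_lt_rpow hK hγ) (by positivity) hT₁ hscale ht

theorem exists_pcond_of_ofReal_lt_gammaIndex {σ : ℝ → ℝ} {a : ℝ}
    (h : ENNReal.ofReal a < gammaIndex σ) : ∃ γ, a < γ ∧ Pcond σ γ := by
  simp only [gammaIndex, lt_iSup_iff] at h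
  obtain ⟨γ, ⟨-, hP⟩, hlt⟩ := h
  exact ⟨γ, (ENNReal.ofReal_lt_ofReal_iff'.1 hlt).1, hP⟩

section UpperConj

variable {ω : ℝ → ℝ}

theorem bddAbove_upperConj_image (hmono : MonotoneOn ω (Ici 0)) (h5 : Omega5 ω) {s : ℝ}
    (hs : 0 < s) : BddAbove ((fun t : ℝ => ω t - s * t) '' Ici 0) := by
  obtain ⟨T, hT⟩ := eventually_atTop.1 (IsLittleO.bound h5 hs)
  refine ⟨max (ω (max T 0)) 0, ?_⟩
  rintro _ ⟨t, ht, rfl⟩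
  have hst : 0 ≤ s * t := mul_nonneg hs.le ht
  rcases le_total t (max T 0) with htT | hTt
  · have := hmono ht (le_max_right T 0) htT
    linarith [le_max_left (ω (max T 0)) 0]
  · have := hT t ((le_max_left T 0).trans hTt)
    rw [Real.norm_of_nonneg (mem_Ici.1 ht)] at this
    linarith [le_abs_self (ω t), Real.norm_eq_abs (ω t), le_max_right (ω (max T 0)) 0]

theorem sub_le_upperConj (hmono : MonotoneOn ω (Ici 0)) (h5 : Omega5 ω) {s t : ℝ}
    (hs : 0 < s) (ht : 0 ≤ t) : ω t - s * t ≤ upperConj ω s :=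
  le_csSup (bddAbove_upperConj_image hmono h5 hs) ⟨t, ht, rfl⟩

theorem antitoneOn_upperConj (hmono : MonotoneOn ω (Ici 0)) (h5 : Omega5 ω) :
    AntitoneOn (upperConj ω) (Ioi 0) := by
  intro a ha b _ hab
  refine csSup_le (nonempty_Ici.image _) ?_
  rintro _ ⟨t, ht, rfl⟩
  calc ω t - b * t ≤ ω t - a * t := by nlinarith [mem_Ici.1 ht]
    _ ≤ upperConj ω a := sub_le_upperConj hmono h5 ha ht

theorem monotoneOn_upperConjIota (hmono : MonotoneOn ω (Ici 0)) (h5 : Omega5 ω) :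
    MonotoneOn (upperConjIota ω) (Ioi 0) := by
  intro a ha b hb hab
  simp only [upperConjIota, (mem_Ioi.1 ha).ne', (mem_Ioi.1 hb).ne', if_false]
  exact antitoneOn_upperConj hmono h5 (mem_Ioi.2 (one_div_pos.2 hb))
    (mem_Ioi.2 (one_div_pos.2 ha))    (one_div_le_one_div_of_le ha hab)

theorem tendsto_upperConjIota_atTop (hmono : MonotoneOn ω (Ici 0)) (h5 : Omega5 ω)
    (htend : Tendsto ω atTop atTop) : Tendsto (upperConjIota ω) atTop atTop := by
  rw [tendsto_atTop]
  intro b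
  obtain ⟨t₀, ht₀⟩ := eventually_atTop.1 (htend.eventually_ge_atTop (b + 1))
  set u := max t₀ 1
  have hu : 0 < u := lt_max_of_lt_right one_pos
  filter_upwards [eventually_ge_atTop u] with t ht
  have htpos : 0 < t := hu.trans_le ht
  have hut : 1 / t * u ≤ 1 := by rw [one_div_mul_eq_div, div_le_one htpos]; exact ht
  rw [upperConjIota, if_neg htpos.ne']
  linarith [ht₀ u (le_max_left t₀ 1), sub_le_upperConj hmono h5 (one_div_pos.2 htpos) hu.le]

theorem isBigO_upperConj_nhdsGT_zero {α : ℝ}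
    (h : upperConjIota ω =O[atTop] fun t => t ^ α) :
    upperConj ω =O[𝓝[>] 0] fun s => s ^ (-α) := by
  refine (h.comp_tendsto tendsto_inv_nhdsGT_zero).congr' ?_ ?_ <;>
    filter_upwards [self_mem_nhdsWithin] with s (hs : 0 < s)
  · simp [upperConjIota, hs.ne']
  · simp [Real.inv_rpow hs.le, Real.rpow_neg hs.le]

end UpperConj

theorem intervalIntegrable_abs_rpow {r : ℝ} (hr : -1 < r) (a b : ℝ) :
    IntervalIntegrable (fun x : ℝ => |x| ^ r) volume a b := by
  have hnonneg : ∀ c, 0 ≤ c → IntervalIntegrable (fun x : ℝ => |x| ^ r) volume 0 c :=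
    fun c hc => (intervalIntegral.intervalIntegrable_rpow' hr).congr fun x hx => by
      rw [uIoc_of_le hc] at hx
      simp only [abs_of_pos hx.1]
  have hfrom_zero : ∀ c, IntervalIntegrable (fun x : ℝ => |x| ^ r) volume 0 c := by
    intro c
    rcases le_total 0 c with hc | hc
    · exact hnonneg c hc
    · rw [IntervalIntegrable.iff_comp_neg]
      simpa using hnonneg (-c) (neg_nonneg.2 hc)
  exact (hfrom_zero a).symm.trans (hfrom_zero b)

theorem lintegral_ofReal_comp_abs_div_one_add_sq_lt_top {g : ℝ → ℝ} {α : ℝ} (hα : α < 1)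
    (hanti : AntitoneOn g (Ioi 0)) (hg : g =O[𝓝[>] 0] fun s => s ^ (-α)) :
    ∫⁻ t, ENNReal.ofReal (g |t| / (1 + t ^ 2)) < ⊤ := by
  obtain ⟨C, hC⟩ := hg.bound
  obtain ⟨s₀, hs₀, hnear⟩ := mem_nhdsGT_iff_exists_Ioc_subset.1 hC
  set f : ℝ → ℝ := fun t =>
    (Icc (-s₀) s₀).indicator (fun t => C * |t| ^ (-α)) t + |g s₀| * (1 + t ^ 2)⁻¹
  have hf : Integrable f := by
    refine Integrable.add ?_ (integrable_inv_one_add_sq.const_mul _)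
    rw [integrable_indicator_iff measurableSet_Icc]
    exact ((intervalIntegrable_iff_integrableOn_Icc_of_le (by linarith [mem_Ioi.1 hs₀])).1
      (intervalIntegrable_abs_rpow (by linarith) _ _)).const_mul C
  have hle : ∀ t : ℝ, t ≠ 0 → g |t| / (1 + t ^ 2) ≤ f t := by
    intro t ht
    have hden : 1 ≤ 1 + t ^ 2 := by nlinarith
    rcases le_or_gt |t| s₀ with hts | hts
    · have hg_t : |g (|t|)| ≤ C * |t| ^ (-α) := by
        simpa [Real.norm_eq_abs, abs_of_nonneg (Real.rpow_nonneg (abs_nonneg t) _)]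
          using hnear ⟨abs_pos.2 ht, hts⟩
      have hfar_nonneg : 0 ≤ |g s₀| * (1 + t ^ 2)⁻¹ := by positivity
      calc g |t| / (1 + t ^ 2) ≤ |g (|t|)| / (1 + t ^ 2) := by gcongr; exact le_abs_self _
        _ ≤ |g (|t|)| := div_le_self (abs_nonneg _) hden
        _ ≤ f t := by
          have hmem : t ∈ Icc (-s₀) s₀ := abs_le.1 hts
          simp only [f, indicator_of_mem hmem]
          linarith
    · have hnot : t ∉ Icc (-s₀) s₀ := fun h => hts.not_ge (abs_le.2 h)
      have hg_t : g |t| ≤ |g s₀| := (hanti hs₀ (abs_pos.2 ht) hts.le).trans (le_abs_self _)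
      simp only [f, indicator_of_notMem hnot, zero_add, ← div_eq_mul_inv]
      gcongr
  calc ∫⁻ t, ENNReal.ofReal (g |t| / (1 + t ^ 2)) ≤ ∫⁻ t, ENNReal.ofReal (f t) := by
        refine lintegral_mono_ae ?_
        filter_upwards [Measure.ae_ne volume 0] with t ht
        exact ENNReal.ofReal_le_ofReal (hle t ht)
    _ < ⊤ := hf.lintegral_lt_top

/-- Lemma 2.1.2 analogue: convergence of
`∫_{−∞}^{+∞} ω⋆(|t|)/(1+t²) dt`. -/
theorem upperConj_poisson_integrable
    (ω : ℝ → ℝ) (hω : IsWeightFunction ω) (h5 : Omega5 ω)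
    (hγι : 1 < gammaIndex (upperConjIota ω)) :
    (∫⁻ t : ℝ, ENNReal.ofReal (upperConj ω |t| / (1 + t ^ 2))) < ⊤ := by
  obtain ⟨γ, hγ, hP⟩ :=
    exists_pcond_of_ofReal_lt_gammaIndex (a := 1) (by rwa [ENNReal.ofReal_one])
  have hgrowth : upperConjIota ω =O[atTop] fun t => t ^ γ⁻¹ :=
    hP.isBigO_rpow_inv (by linarith)
      ((tendsto_upperConjIota_atTop hω.monotoneOn h5 hω.tendsto_atTop).eventually_gt_atTop 0)
      (monotoneOn_upperConjIota hω.monotoneOn h5)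
  exact lintegral_ofReal_comp_abs_div_one_add_sq_lt_top (inv_lt_one_of_one_lt₀ hγ)
    (antitoneOn_upperConj hω.monotoneOn h5) (isBigO_upperConj_nhdsGT_zero hgrowth)
end

section
/- Let M = (M_p)_{p∈ℕ} be a sequence of positive reals with M_0 = 1 such that (m_p)^{1/p} → ∞, where m_p := M_p/p!. Then for all s > 0: (ω_M)⋆(s) ≤ ω_m(1/s) ≤ (ω_M)⋆(s/e); equivalently, ((ω_M)⋆)^ι(s) ≤ ω_m(s) ≤ ((ω_M)⋆)^ι(se) for all s > 0. -/
open Filter MeasureTheory Set Asymptotics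

/-! For each `p`, `sup_{t ≥ 0} (p log t − log M_p − s t)` is attained at `t = p/s`, so
`(ω_M)⋆(s) = sup_p log ((p/(e s))^p / M_p)`, while `ω_m(1/s) = sup_p log (p! / (s^p M_p))`.
The two estimates are therefore the termwise bounds `p^p/e^p ≤ p! ≤ p^p`, which enter as
`x^p/p! ≤ e^x` (at `x = s t`) and `p! ≤ p^p` (at `t = e p / s`). -/

open Real

lemma assocWeight_of_pos (P : ℕ → ℝ) {t : ℝ} (ht : 0 < t) :
    assocWeight P t = ⨆ p : ℕ, log (t ^ p / P p) :=
  if_neg ht.not_ge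

section AssocWeight

variable {P : ℕ → ℝ} (hP : ∀ p, 0 < P p)
  (hroot : Tendsto (fun p : ℕ => P p ^ ((1 : ℝ) / p)) atTop atTop)

include hP hroot

lemma bddAbove_range_log_pow_div {t : ℝ} (ht : 0 < t) :
    BddAbove (range fun p : ℕ => log (t ^ p / P p)) := by
  refine IsBoundedUnder.bddAbove_range (isBoundedUnder_of_eventually_le (a := 0) ?_)
  filter_upwards [hroot.eventually_ge_atTop t, eventually_ne_atTop 0] with p hp hp0
  have hpow : t ^ p ≤ P p := by
    calc t ^ p ≤ (P p ^ ((1 : ℝ) / p)) ^ p := pow_le_pow_left₀ ht.le hp p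
      _ = P p := by rw [one_div, rpow_inv_natCast_pow (hP p).le hp0]
  exact log_nonpos (div_nonneg (by positivity) (hP p).le) ((div_le_one (hP p)).2 hpow)

lemma log_pow_div_le_assocWeight {t : ℝ} (ht : 0 < t) (p : ℕ) :
    log (t ^ p / P p) ≤ assocWeight P t := by
  rw [assocWeight_of_pos P ht]
  exact le_ciSup (bddAbove_range_log_pow_div hP hroot ht) p

lemma assocWeight_nonneg (hP0 : P 0 = 1) (t : ℝ) : 0 ≤ assocWeight P t := by
  rcases le_or_gt t 0 with ht | ht
  · exact (if_pos ht).ge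
  · simpa [hP0] using log_pow_div_le_assocWeight hP hroot ht 0

end AssocWeight

lemma tendsto_root_of_tendsto_root_div_factorial {M : ℕ → ℝ} (hM : ∀ p, 0 < M p)
    (hm : Tendsto (fun p : ℕ => (M p / p.factorial) ^ ((1 : ℝ) / p)) atTop atTop) :
    Tendsto (fun p : ℕ => M p ^ ((1 : ℝ) / p)) atTop atTop :=
  tendsto_atTop_mono (fun p => rpow_le_rpow (by have := hM p; positivity)
    (div_le_self (hM p).le (by exact_mod_cast p.factorial_pos)) (by positivity)) hm

lemma log_pow_div_sub_mul_le {a s t : ℝ} (ha : 0 < a) (hs : 0 < s) (ht : 0 < t) (p : ℕ) :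
    log (t ^ p / a) - s * t ≤ log ((1 / s) ^ p / (a / p.factorial)) := by
  have hsplit : t ^ p / a = (s * t) ^ p / p.factorial * ((1 / s) ^ p / (a / p.factorial)) := by
    rw [mul_pow, one_div, inv_pow]
    field_simp
  have hexp : log ((s * t) ^ p / p.factorial) ≤ s * t := by
    rw [log_le_iff_le_exp (by positivity)]
    exact pow_div_factorial_le_exp _ (by positivity) p
  rw [hsplit, log_mul (by positivity) (by positivity)]
  linarith

lemma log_pow_div_add_le {a s : ℝ} (ha : 0 < a) (hs : 0 < s) (p : ℕ) :
    log ((1 / s) ^ p / (a / p.factorial)) + p ≤ log ((exp 1 * p / s) ^ p / a) := by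
  have hfac : (0 : ℝ) < p.factorial := by exact_mod_cast p.factorial_pos
  have hsplit : (exp 1 * p / s) ^ p / a =
      (1 / s) ^ p / (a / p.factorial) * exp p * ((p : ℝ) ^ p / p.factorial) := by
    rw [← exp_one_pow, div_pow, mul_pow, one_div, inv_pow]
    field_simp
  have hfac_le : (1 : ℝ) ≤ (p : ℝ) ^ p / p.factorial :=
    (one_le_div hfac).2 (by exact_mod_cast p.factorial_le_pow)
  rw [hsplit, log_mul (by positivity) (by positivity), log_mul (by positivity) (by positivity),
    log_exp]
  linarith [log_nonneg hfac_le]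

section UpperConj

variable {ω : ℝ → ℝ} {s : ℝ}

lemma le_upperConj (hω : BddAbove ((fun t => ω t - s * t) '' Ici 0)) {t : ℝ} (ht : 0 ≤ t) :
    ω t - s * t ≤ upperConj ω s :=
  le_csSup hω ⟨t, ht, rfl⟩

lemma upperConj_le {c : ℝ} (h : ∀ t, 0 ≤ t → ω t - s * t ≤ c) : upperConj ω s ≤ c :=
  csSup_le ⟨_, 0, self_mem_Ici, rfl⟩ (by rintro _ ⟨t, ht, rfl⟩; exact h t ht)

end UpperConj

section Estimates

variable {M : ℕ → ℝ} (hM : ∀ p, 0 < M p) (hM0 : M 0 = 1)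
  (hm : Tendsto (fun p : ℕ => (M p / p.factorial) ^ ((1 : ℝ) / p)) atTop atTop)

include hM hM0 hm

lemma assocWeight_sub_mul_le {s : ℝ} (hs : 0 < s) {t : ℝ} (ht : 0 ≤ t) :
    assocWeight M t - s * t ≤ assocWeight (fun p => M p / p.factorial) (1 / s) := by
  have hm_pos : ∀ p, 0 < M p / p.factorial := fun p => by
    have := hM p; positivity
  have hm_nonneg := assocWeight_nonneg hm_pos hm (by simp [hM0]) (1 / s)
  rcases ht.eq_or_lt with rfl | ht
  · simpa [assocWeight] using hm_nonneg
  rw [assocWeight_of_pos M ht, sub_le_iff_le_add]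
  refine ciSup_le fun p => ?_
  have := log_pow_div_le_assocWeight hm_pos hm (one_div_pos.2 hs) p
  linarith [log_pow_div_sub_mul_le (hM p) hs ht p]

lemma upperConj_assocWeight_le {s : ℝ} (hs : 0 < s) :
    upperConj (assocWeight M) s ≤ assocWeight (fun p => M p / p.factorial) (1 / s) :=
  upperConj_le fun _ ht => assocWeight_sub_mul_le hM hM0 hm hs ht

lemma assocWeight_le_upperConj {s : ℝ} (hs : 0 < s) :
    assocWeight (fun p => M p / p.factorial) (1 / s) ≤
      upperConj (assocWeight M) (s / exp 1) := by
  have hs' : 0 < s / exp 1 := by positivity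
  have hbdd : BddAbove ((fun t => assocWeight M t - s / exp 1 * t) '' Ici 0) :=
    ⟨_, by rintro _ ⟨t, ht, rfl⟩; exact assocWeight_sub_mul_le hM hM0 hm hs' ht⟩
  rw [assocWeight_of_pos _ (one_div_pos.2 hs)]
  refine ciSup_le fun p => ?_
  rcases p.eq_zero_or_pos with rfl | hp
  · simpa [hM0, assocWeight] using le_upperConj hbdd le_rfl
  · have ht : 0 < exp 1 * p / s := by positivity
    have hpen : s / exp 1 * (exp 1 * p / s) = p := by field_simp
    have := log_pow_div_le_assocWeight hM
      (tendsto_root_of_tendsto_root_div_factorial hM hm) ht p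
    linarith [log_pow_div_add_le (hM p) hs p, le_upperConj hbdd ht.le]

end Estimates

/-- Lemma 3.1 analogue: relation between `(ω_M)⋆` and `ω_m`,
`m_p = M_p/p!`. -/
theorem upperConj_assocWeight_estimates
    (M : ℕ → ℝ) (hpos : ∀ p, 0 < M p) (hM0 : M 0 = 1)
    (hm : Filter.Tendsto
      (fun p : ℕ => (M p / (Nat.factorial p : ℝ)) ^ ((1 : ℝ) / (p : ℝ)))
      Filter.atTop Filter.atTop) :
    ∀ s : ℝ, 0 < s →
      (upperConj (assocWeight M) s ≤
          assocWeight (fun p => M p / (Nat.factorial p : ℝ)) (1 / s) ∧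
        assocWeight (fun p => M p / (Nat.factorial p : ℝ)) (1 / s) ≤
          upperConj (assocWeight M) (s / Real.exp 1)) ∧
      (upperConjIota (assocWeight M) s ≤
          assocWeight (fun p => M p / (Nat.factorial p : ℝ)) s ∧
        assocWeight (fun p => M p / (Nat.factorial p : ℝ)) s ≤
          upperConjIota (assocWeight M) (s * Real.exp 1)) := by
  intro s hs
  have hs' : 0 < 1 / s := one_div_pos.2 hs
  refine ⟨⟨upperConj_assocWeight_le hpos hM0 hm hs, assocWeight_le_upperConj hpos hM0 hm hs⟩,
    ?_, ?_⟩
  · rw [upperConjIota, if_neg hs.ne']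
    simpa only [one_div_one_div] using upperConj_assocWeight_le hpos hM0 hm hs'
  · rw [upperConjIota, if_neg (by positivity), ← div_div]
    simpa only [one_div_one_div] using assocWeight_le_upperConj hpos hM0 hm hs'
end

section
/- A weight function ω satisfies (ω_snq) — there exists C > 0 such that ∫₁^∞ ω(yt)/t² dt ≤ C(ω(y) + 1) for all y > 0 — if and only if γ(ω) > 1, i.e. if and only if there exist γ > 1 and K > 1 with limsup_{t→∞} ω(K^γ t)/ω(t) < K. -/
open Filter MeasureTheory Set Asymptotics

/-! With `κ(y) = ∫₁^∞ ω(yt) t⁻² dt`, both directions go through a single scaling inequality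
`ω(at) ≤ c ω(t)` for large `t`, with `c < a`.

If it holds, cutting `(1, ∞)` into the intervals `[aⁿ, aⁿ⁺¹)` bounds `κ(y)` by `ω(y)` times a
geometric series of ratio `c / a`. Conversely, the substitution `t ↦ st` gives
`κ(sy) + (s - 1) ω(y) ≤ s κ(y)`; together with `ω ≤ κ ≤ C (ω + 1)` this yields `κ(2y) ≤ r κ(y)`
for large `y` with some `r < 2`, hence `ω(2ⁿy) ≤ 2C rⁿ ω(y)`, and `2C rⁿ < 2ⁿ` for large `n`.

Finally the scaling inequality with `c < a` is `(P_{ω,γ})` with `a = K ^ γ` for any `K ∈ (c, a)`,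
and `γ > 1` because `K < a`. -/

open scoped ENNReal

namespace IsWeightFunction

variable {ω : ℝ → ℝ}

lemma mono (hω : IsWeightFunction ω) {s t : ℝ} (hs : 0 ≤ s) (hst : s ≤ t) : ω s ≤ ω t :=
  hω.monotoneOn hs (hs.trans hst) hst

lemma nonneg (hω : IsWeightFunction ω) {t : ℝ} (ht : 0 ≤ t) : 0 ≤ ω t :=
  hω.map_zero ▸ hω.mono le_rfl ht

end IsWeightFunction

lemma one_lt_gammaIndex_iff {ω : ℝ → ℝ} : 1 < gammaIndex ω ↔ ∃ γ : ℝ, 1 < γ ∧ Pcond ω γ := by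
  simp only [gammaIndex, lt_iSup_iff, mem_ofPred_eq, ENNReal.one_lt_ofReal, exists_prop]
  constructor
  · rintro ⟨γ, ⟨-, hP⟩, hγ⟩
    exact ⟨γ, hγ, hP⟩
  · rintro ⟨γ, hγ, hP⟩
    exact ⟨γ, ⟨one_pos.trans hγ, hP⟩, hγ⟩

def HasSublinearScaling (ω : ℝ → ℝ) : Prop :=
  ∃ a c : ℝ, 1 < a ∧ 0 ≤ c ∧ c < a ∧ ∀ᶠ t in atTop, ω (a * t) ≤ c * ω t

lemma exists_pcond_iff_hasSublinearScaling {ω : ℝ → ℝ} (hpos : ∀ᶠ t in atTop, 0 < ω t) :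
    (∃ γ : ℝ, 1 < γ ∧ Pcond ω γ) ↔ HasSublinearScaling ω := by
  constructor
  · rintro ⟨γ, hγ, K, hK, c, hcK, hev⟩
    have hKa : K < K ^ γ := Real.self_lt_rpow_of_one_lt hK hγ
    refine ⟨K ^ γ, max c 0, hK.trans hKa, le_max_right _ _,
      max_lt (hcK.trans hKa) (by linarith), ?_⟩
    filter_upwards [hev, hpos] with t hratio ht
    calc ω (K ^ γ * t) ≤ c * ω t := (div_le_iff₀ ht).1 hratio
      _ ≤ max c 0 * ω t := mul_le_mul_of_nonneg_right (le_max_left _ _) ht.le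
  · rintro ⟨a, c, ha, -, hca, hev⟩
    obtain ⟨K, hcK1, hKa⟩ := exists_between (max_lt hca ha)
    obtain ⟨hcK, hK⟩ := max_lt_iff.1 hcK1
    have hlogK : 0 < Real.log K := Real.log_pos hK
    have hKγ : K ^ (Real.log a / Real.log K) = a := by
      rw [Real.rpow_def_of_pos (by linarith), mul_div_cancel₀ _ hlogK.ne',
        Real.exp_log (by linarith)]
    refine ⟨Real.log a / Real.log K, (one_lt_div hlogK).2 (Real.log_lt_log (by linarith) hKa),
      K, hK, c, hcK, ?_⟩
    filter_upwards [hev, hpos] with t hscale ht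
    rw [hKγ]
    exact (div_le_iff₀ ht).2 hscale

lemma map_pow_mul_le_pow_mul {g : ℝ → ℝ} {s r T : ℝ} (hs : 1 ≤ s) (hr : 0 ≤ r) (hT : 0 ≤ T)
    (h : ∀ t, T ≤ t → g (s * t) ≤ r * g t) (n : ℕ) {t : ℝ} (ht : T ≤ t) :
    g (s ^ n * t) ≤ r ^ n * g t := by
  induction n with
  | zero => simp
  | succ n ih =>
    have hTn : T ≤ s ^ n * t := ht.trans (le_mul_of_one_le_left (hT.trans ht) (one_le_pow₀ hs))
    calc g (s ^ (n + 1) * t) = g (s * (s ^ n * t)) := by rw [pow_succ', mul_assoc]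
      _ ≤ r * g (s ^ n * t) := h _ hTn
      _ ≤ r * (r ^ n * g t) := mul_le_mul_of_nonneg_left ih hr
      _ = r ^ (n + 1) * g t := by rw [pow_succ', mul_assoc]

lemma setLIntegral_Ioi_one_le_tsum_Ico {a : ℝ} (ha : 1 < a) (F : ℝ → ℝ≥0∞) :
    ∫⁻ t in Ioi 1, F t ≤ ∑' n : ℕ, ∫⁻ t in Ico (a ^ n) (a ^ (n + 1)), F t :=
  (lintegral_mono_set fun _ ht => mem_iUnion.2 (exists_nat_pow_near (le_of_lt ht) ha)).trans
    (lintegral_iUnion_le _ _)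

namespace IsWeightFunction

variable {ω : ℝ → ℝ}

lemma setLIntegral_Ioi_one_mono (hω : IsWeightFunction ω) {y z : ℝ} (hy : 0 ≤ y) (hyz : y ≤ z) :
    ∫⁻ t in Ioi 1, ENNReal.ofReal (ω (y * t) / t ^ 2) ≤
      ∫⁻ t in Ioi 1, ENNReal.ofReal (ω (z * t) / t ^ 2) := by
  refine setLIntegral_mono' measurableSet_Ioi fun t (ht : 1 < t) => ENNReal.ofReal_le_ofReal ?_
  have ht0 : 0 ≤ t := by linarith
  exact div_le_div_of_nonneg_right (hω.mono (by positivity) (by gcongr)) (by positivity)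

lemma setLIntegral_Ico_le (hω : IsWeightFunction ω) {y p q : ℝ} (hy : 0 ≤ y) (hp : 0 < p)
    (hpq : p ≤ q) :
    ∫⁻ t in Ico p q, ENNReal.ofReal (ω (y * t) / t ^ 2) ≤
      ENNReal.ofReal (ω (y * q) * (q - p) / p ^ 2) := by
  calc ∫⁻ t in Ico p q, ENNReal.ofReal (ω (y * t) / t ^ 2)
      ≤ ∫⁻ _ in Ico p q, ENNReal.ofReal (ω (y * q) / p ^ 2) := by
        refine setLIntegral_mono' measurableSet_Ico fun t ⟨hpt, htq⟩ => ENNReal.ofReal_le_ofReal ?_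
        have ht0 : 0 ≤ t := by linarith
        have hq0 : 0 ≤ q := by linarith
        exact div_le_div₀ (hω.nonneg (by positivity)) (hω.mono (by positivity) (by gcongr))
          (by positivity) (by gcongr)
    _ = ENNReal.ofReal (ω (y * q) * (q - p) / p ^ 2) := by
        rw [setLIntegral_const, Real.volume_Ico, ← ENNReal.ofReal_mul, div_mul_eq_mul_div]
        exact div_nonneg (hω.nonneg (mul_nonneg hy (hp.le.trans hpq))) (by positivity)

lemma setLIntegral_Ioi_one_le_of_scaling (hω : IsWeightFunction ω) {a c T : ℝ} (ha : 1 < a)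
    (hc : 0 ≤ c) (hca : c < a) (hT : 0 ≤ T) (hscale : ∀ t, T ≤ t → ω (a * t) ≤ c * ω t)
    {y : ℝ} (hy : T ≤ y) :
    ∫⁻ t in Ioi 1, ENNReal.ofReal (ω (y * t) / t ^ 2) ≤
      ENNReal.ofReal ((a - 1) * c / (1 - c / a) * ω y) := by
  have ha0 : 0 < a := by linarith
  have hρ : c / a < 1 := (div_lt_one ha0).2 hca
  have hb : 0 ≤ (a - 1) * c * ω y := mul_nonneg (by nlinarith) (hω.nonneg (hT.trans hy))
  have hblock : ∀ n : ℕ, ω (y * a ^ (n + 1)) * (a ^ (n + 1) - a ^ n) / (a ^ n) ^ 2 ≤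
      (a - 1) * c * ω y * (c / a) ^ n := fun n => by
    have hpow : 0 < a ^ n := pow_pos ha0 n
    calc ω (y * a ^ (n + 1)) * (a ^ (n + 1) - a ^ n) / (a ^ n) ^ 2
        = ω (a ^ (n + 1) * y) * ((a - 1) / a ^ n) := by
          rw [mul_comm y]; field_simp; ring
      _ ≤ c ^ (n + 1) * ω y * ((a - 1) / a ^ n) :=
          mul_le_mul_of_nonneg_right (map_pow_mul_le_pow_mul ha.le hc hT hscale (n + 1) hy)
            (div_nonneg (by linarith) hpow.le)
      _ = (a - 1) * c * ω y * (c / a) ^ n := by rw [div_pow]; field_simp; ring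
  calc ∫⁻ t in Ioi 1, ENNReal.ofReal (ω (y * t) / t ^ 2)
      ≤ ∑' n : ℕ, ∫⁻ t in Ico (a ^ n) (a ^ (n + 1)), ENNReal.ofReal (ω (y * t) / t ^ 2) :=
        setLIntegral_Ioi_one_le_tsum_Ico ha _
    _ ≤ ∑' n : ℕ, ENNReal.ofReal ((a - 1) * c * ω y * (c / a) ^ n) :=
        ENNReal.tsum_le_tsum fun n => (hω.setLIntegral_Ico_le (hT.trans hy) (pow_pos ha0 n)
          (pow_le_pow_right₀ ha.le n.le_succ)).trans
          (ENNReal.ofReal_le_ofReal (hblock n))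
    _ = ENNReal.ofReal (∑' n : ℕ, (a - 1) * c * ω y * (c / a) ^ n) :=
        (ENNReal.ofReal_tsum_of_nonneg (fun n => by positivity)
          ((summable_geometric_of_lt_one (by positivity) hρ).mul_left _)).symm
    _ = ENNReal.ofReal ((a - 1) * c / (1 - c / a) * ω y) := by
        rw [tsum_mul_left, tsum_geometric_of_lt_one (by positivity) hρ]
        ring_nf

lemma omegaSnq_of_hasSublinearScaling (hω : IsWeightFunction ω) (h : HasSublinearScaling ω) :
    OmegaSnq ω := by
  obtain ⟨a, c, ha, hc, hca, hev⟩ := h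
  obtain ⟨T₀, hT₀⟩ := eventually_atTop.1 hev
  set T := max T₀ 0
  set B := (a - 1) * c / (1 - c / a)
  have hT : 0 ≤ T := le_max_right _ _
  have hB : 0 ≤ B :=
    div_nonneg (mul_nonneg (by linarith) hc) (sub_nonneg.2 ((div_lt_one (by linarith)).2 hca).le)
  have hbound : ∀ y, T ≤ y → ∫⁻ t in Ioi 1, ENNReal.ofReal (ω (y * t) / t ^ 2) ≤
      ENNReal.ofReal (B * ω y) := fun y =>
    hω.setLIntegral_Ioi_one_le_of_scaling ha hc hca hT fun t ht => hT₀ t (le_of_max_le_left ht)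
  have hωT := hω.nonneg hT
  refine ⟨B * (ω T + 1) + 1, by positivity, fun y hy => ?_⟩
  have hωy := hω.nonneg hy.le
  have hC : B * ω y ≤ (B * (ω T + 1) + 1) * (ω y + 1) := by
    nlinarith [mul_nonneg (mul_nonneg hB hωT) hωy, mul_nonneg hB hωT]
  have hC' : B * ω T ≤ (B * (ω T + 1) + 1) * (ω y + 1) := by
    nlinarith [mul_nonneg (mul_nonneg hB hωT) hωy, mul_nonneg hB hωy]
  rcases le_total T y with hTy | hyT
  · exact (hbound y hTy).trans (ENNReal.ofReal_le_ofReal hC)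
  · calc ∫⁻ t in Ioi 1, ENNReal.ofReal (ω (y * t) / t ^ 2)
        ≤ ∫⁻ t in Ioi 1, ENNReal.ofReal (ω (T * t) / t ^ 2) :=
          hω.setLIntegral_Ioi_one_mono hy.le hyT
      _ ≤ ENNReal.ofReal (B * ω T) := hbound T le_rfl
      _ ≤ ENNReal.ofReal ((B * (ω T + 1) + 1) * (ω y + 1)) := ENNReal.ofReal_le_ofReal hC'

end IsWeightFunction

lemma rpow_neg_two_eqOn_inv_sq {c : ℝ} (hc : 0 ≤ c) :
    EqOn (fun t : ℝ => t ^ (-2 : ℝ)) (fun t => (t ^ 2)⁻¹) (Ioi c) := fun t (ht : c < t) => by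
  simp only [Real.rpow_neg (hc.trans ht.le), Real.rpow_two]

lemma integrableOn_Ioi_inv_sq {c : ℝ} (hc : 0 < c) :
    IntegrableOn (fun t : ℝ => (t ^ 2)⁻¹) (Ioi c) :=
  (integrableOn_Ioi_rpow_of_lt (by norm_num) hc).congr_fun (rpow_neg_two_eqOn_inv_sq hc.le)
    measurableSet_Ioi

lemma integral_Ioi_inv_sq {c : ℝ} (hc : 0 < c) : ∫ t in Ioi c, (t ^ 2)⁻¹ = c⁻¹ := by
  rw [← setIntegral_congr_fun measurableSet_Ioi (rpow_neg_two_eqOn_inv_sq hc.le),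
    integral_Ioi_rpow_of_lt (by norm_num) hc, show (-2 : ℝ) + 1 = -1 by norm_num, Real.rpow_neg_one]
  ring

noncomputable def snqIntegral (ω : ℝ → ℝ) (y : ℝ) : ℝ :=
  ∫ t in Ioi 1, ω (y * t) / t ^ 2

lemma snqIntegral_mul {ω : ℝ → ℝ} {s : ℝ} (hs : 0 < s) (y : ℝ) :
    snqIntegral ω (s * y) = s * ∫ t in Ioi s, ω (y * t) / t ^ 2 := by
  have hsub := integral_comp_mul_left_Ioi (fun t => ω (y * t) / t ^ 2) 1 hs
  rw [mul_one, smul_eq_mul] at hsub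
  have hrw : ∀ t : ℝ, ω (s * y * t) / t ^ 2 = s ^ 2 * (ω (y * (s * t)) / (s * t) ^ 2) := fun t => by
    rw [mul_right_comm s y t, mul_assoc]
    field_simp
  simp only [snqIntegral, hrw, integral_const_mul, hsub]
  field_simp

namespace IsWeightFunction

variable {ω : ℝ → ℝ}

lemma continuousOn_snqIntegrand (hω : IsWeightFunction ω) {y : ℝ} (hy : 0 ≤ y) :
    ContinuousOn (fun t : ℝ => ω (y * t) / t ^ 2) (Ioi 0) :=
  (hω.continuousOn.comp (continuous_const.mul continuous_id).continuousOn
      fun t (ht : 0 < t) => mul_nonneg hy ht.le).div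
    (continuous_pow 2).continuousOn fun t (ht : 0 < t) => by positivity

lemma exists_integrableOn_and_snqIntegral_le (hω : IsWeightFunction ω) (h : OmegaSnq ω) :
    ∃ C : ℝ, 0 < C ∧ ∀ y : ℝ, 0 < y →
      IntegrableOn (fun t : ℝ => ω (y * t) / t ^ 2) (Ioi 1) ∧ snqIntegral ω y ≤ C * (ω y + 1) := by
  obtain ⟨C, hC, hsnq⟩ := h
  refine ⟨C, hC, fun y hy => ?_⟩
  have hnonneg : 0 ≤ᵐ[volume.restrict (Ioi 1)] fun t : ℝ => ω (y * t) / t ^ 2 :=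
    (ae_restrict_iff' measurableSet_Ioi).2 <| Eventually.of_forall fun t (ht : 1 < t) =>
      div_nonneg (hω.nonneg (mul_nonneg hy.le (by linarith))) (by positivity)
  have hmeas : AEStronglyMeasurable (fun t : ℝ => ω (y * t) / t ^ 2) (volume.restrict (Ioi 1)) :=
    ((hω.continuousOn_snqIntegrand hy.le).mono (Ioi_subset_Ioi zero_le_one)).aestronglyMeasurable
      measurableSet_Ioi
  have hint : IntegrableOn (fun t : ℝ => ω (y * t) / t ^ 2) (Ioi 1) :=
    ⟨hmeas, (hasFiniteIntegral_iff_ofReal hnonneg).2 ((hsnq y hy).trans_lt ENNReal.ofReal_lt_top)⟩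
  refine ⟨hint, (ENNReal.ofReal_le_ofReal_iff ?_).1 ?_⟩
  · exact mul_nonneg hC.le (by linarith [hω.nonneg hy.le])
  · rw [snqIntegral, ofReal_integral_eq_lintegral_ofReal hint hnonneg]
    exact hsnq y hy

lemma mul_setIntegral_inv_sq_le (hω : IsWeightFunction ω) {S : Set ℝ} (hS : MeasurableSet S)
    (hS1 : S ⊆ Ioi 1) {y : ℝ} (hy : 0 ≤ y)
    (hint : IntegrableOn (fun t : ℝ => ω (y * t) / t ^ 2) S) :
    ω y * ∫ t in S, (t ^ 2)⁻¹ ≤ ∫ t in S, ω (y * t) / t ^ 2 := by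
  rw [← integral_const_mul]
  refine setIntegral_mono_on (((integrableOn_Ioi_inv_sq one_pos).mono_set hS1).const_mul _) hint hS
    fun t ht => ?_
  have ht1 : 1 < t := hS1 ht
  rw [← div_eq_mul_inv]
  exact div_le_div_of_nonneg_right (hω.mono hy (le_mul_of_one_le_right hy ht1.le)) (by positivity)

lemma le_snqIntegral (hω : IsWeightFunction ω) {y : ℝ} (hy : 0 ≤ y)
    (hint : IntegrableOn (fun t : ℝ => ω (y * t) / t ^ 2) (Ioi 1)) : ω y ≤ snqIntegral ω y := by
  simpa [snqIntegral, integral_Ioi_inv_sq one_pos] using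
    hω.mul_setIntegral_inv_sq_le measurableSet_Ioi subset_rfl hy hint

lemma snqIntegral_mul_add_le (hω : IsWeightFunction ω) {s y : ℝ} (hs : 1 ≤ s) (hy : 0 ≤ y)
    (hint : IntegrableOn (fun t : ℝ => ω (y * t) / t ^ 2) (Ioi 1)) :
    snqIntegral ω (s * y) + (s - 1) * ω y ≤ s * snqIntegral ω y := by
  have hs0 : 0 < s := by linarith
  have hinv_sq : ∫ t in Ioc 1 s, (t ^ 2)⁻¹ = 1 - s⁻¹ := by
    rw [← intervalIntegral.integral_of_le hs, ← intervalIntegral.integral_Ioi_sub_Ioi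
      (integrableOn_Ioi_inv_sq one_pos) hs, integral_Ioi_inv_sq one_pos, integral_Ioi_inv_sq hs0,
      inv_one]
  have hlow : ω y * (1 - s⁻¹) ≤ snqIntegral ω y - ∫ t in Ioi s, ω (y * t) / t ^ 2 := by
    rw [snqIntegral, intervalIntegral.integral_Ioi_sub_Ioi hint hs,
      intervalIntegral.integral_of_le hs, ← hinv_sq]
    exact hω.mul_setIntegral_inv_sq_le measurableSet_Ioc (fun t ht => ht.1) hy
      (hint.mono_set Ioc_subset_Ioi_self)
  have hmul := mul_le_mul_of_nonneg_left hlow hs0.le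
  rw [snqIntegral_mul hs0]
  have hs' : s * (ω y * (1 - s⁻¹)) = (s - 1) * ω y := by field_simp
  linarith

lemma hasSublinearScaling_of_omegaSnq (hω : IsWeightFunction ω) (h : OmegaSnq ω) :
    HasSublinearScaling ω := by
  obtain ⟨C, hC, hsnq⟩ := hω.exists_integrableOn_and_snqIntegral_le h
  obtain ⟨Y₀, hY₀⟩ := eventually_atTop.1 (hω.tendsto_atTop.eventually_ge_atTop 1)
  set Y := max Y₀ 1
  have hY : 0 < Y := lt_max_of_lt_right one_pos
  have hωY : ∀ y, Y ≤ y → 1 ≤ ω y := fun y hy => hY₀ y (le_of_max_le_left hy)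
  have hupper : ∀ y, Y ≤ y → snqIntegral ω y ≤ 2 * C * ω y := fun y hy => by
    nlinarith [(hsnq y (hY.trans_le hy)).2, hωY y hy]
  have hlower : ∀ y, Y ≤ y → ω y ≤ snqIntegral ω y := fun y hy =>
    hω.le_snqIntegral (hY.trans_le hy).le (hsnq y (hY.trans_le hy)).1
  have hD : 1 ≤ 2 * C := by
    nlinarith [hωY Y le_rfl, hupper Y le_rfl, hlower Y le_rfl]
  set r := 2 - (2 * C)⁻¹
  have hr : 1 ≤ r := by
    have : (2 * C)⁻¹ ≤ 1 := inv_le_one_of_one_le₀ hD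
    linarith
  have hr2 : r / 2 < 1 := by
    have : 0 < (2 * C)⁻¹ := by positivity
    rw [div_lt_one two_pos]
    linarith
  -- `ω ≥ κ / (2C)` turns `κ(2y) + ω(y) ≤ 2κ(y)` into a contraction of ratio `r < 2`.
  have hstep : ∀ y, Y ≤ y → snqIntegral ω (2 * y) ≤ r * snqIntegral ω y := fun y hy => by
    have hkey := hω.snqIntegral_mul_add_le one_le_two (hY.trans_le hy).le
      (hsnq y (hY.trans_le hy)).1
    have hω_ge : (2 * C)⁻¹ * snqIntegral ω y ≤ ω y := by
      rw [inv_mul_le_iff₀ (by positivity)]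
      exact hupper y hy
    linarith
  obtain ⟨n, hn⟩ := exists_pow_lt_of_lt_one (inv_pos.2 (by positivity : 0 < 2 * C)) hr2
  rw [div_pow, div_lt_iff₀ (by positivity), lt_inv_mul_iff₀ (by positivity)] at hn
  refine ⟨2 ^ n, 2 * C * r ^ n, (one_le_mul_of_one_le_of_one_le hD (one_le_pow₀ hr)).trans_lt hn,
    by positivity, hn, ?_⟩
  filter_upwards [eventually_ge_atTop Y] with y hy
  calc ω (2 ^ n * y) ≤ snqIntegral ω (2 ^ n * y) :=
        hlower _ (hy.trans (le_mul_of_one_le_left (hY.trans_le hy).le (one_le_pow₀ one_le_two)))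
    _ ≤ r ^ n * snqIntegral ω y :=
        map_pow_mul_le_pow_mul one_le_two (by linarith) hY.le hstep n hy
    _ ≤ r ^ n * (2 * C * ω y) := mul_le_mul_of_nonneg_left (hupper y hy) (by positivity)
    _ = 2 * C * r ^ n * ω y := by ring

end IsWeightFunction

/-- Lemma 4.3 analogue: a weight function satisfies `(ω_snq)`
iff `γ(ω) > 1`, i.e. iff `(P_{ω,γ})` holds for some `γ > 1`. -/
theorem snq_iff_gammaIndex_gt_one
    (ω : ℝ → ℝ) (hω : IsWeightFunction ω) :
    (OmegaSnq ω ↔ 1 < gammaIndex ω) ∧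
    (OmegaSnq ω ↔ ∃ γ : ℝ, 1 < γ ∧ Pcond ω γ) := by
  have hscaling : OmegaSnq ω ↔ HasSublinearScaling ω :=
    ⟨hω.hasSublinearScaling_of_omegaSnq, hω.omegaSnq_of_hasSublinearScaling⟩
  have hpcond : OmegaSnq ω ↔ ∃ γ : ℝ, 1 < γ ∧ Pcond ω γ :=
    hscaling.trans (exists_pcond_iff_hasSublinearScaling
      (hω.tendsto_atTop.eventually_gt_atTop 0)).symm
  exact ⟨hpcond.trans one_lt_gammaIndex_iff.symm, hpcond⟩
end

section
/- Let ω be a weight function with γ(ω) > 1. Then ω satisfies (ω_5) (so ω⋆(s) < ∞ for all s > 0 and (ω⋆)^ι is a weight function on (0,∞)), the function (ω⋆)^ι satisfies (ω_1), and γ(ω) = γ((ω⋆)^ι) + 1 as an equality in [0,+∞]. In particular, if γ(ω) > 2 then (ω⋆)^ι satisfies (ω_snq). -/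
open Filter MeasureTheory Set Asymptotics

/-!
Iterating `ω (K ^ γ t) ≤ c ω t` (with `c < K`) gives `ω (y t) ≤ C ω(y) t ^ β` for large `y` and
`t ≥ 1`, with `β γ < 1`. This bound yields `(ω₁)`, and for `γ ≥ 1` (so `β < 1`) also `(ω₅)` and
`(ω_snq)`. For `σ = (ω⋆)^ι`, i.e. `σ x = sup_u (ω u - u / x)`, the substitution `u = K ^ γ v` turns
`(P_{ω,γ})` into `(P_{σ,γ-1})`. Conversely, the bound gives `σ (2 t / ω t) ≲ ω t`, and the Young
inequality `ω u ≤ σ x + u / x` at `x = K ^ γ · 2 t / ω t` turns `(P_{σ,γ})` back into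
`(P_{ω,γ+1})`. Hence the two growth indices differ by exactly `1`.
-/

lemma Pcond.exists_le_mul {f : ℝ → ℝ} {γ : ℝ} (hP : Pcond f γ)
    (htend : Tendsto f atTop atTop) :
    ∃ K c T : ℝ, 1 < K ∧ 1 ≤ c ∧ c < K ∧ 0 < T ∧
      ∀ t, T ≤ t → f (K ^ γ * t) ≤ c * f t := by
  obtain ⟨K, hK, c, hcK, hev⟩ := hP
  obtain ⟨T, hT⟩ := eventually_atTop.mp
    ((htend.eventually_ge_atTop 1).and (hev.and (eventually_gt_atTop 0)))
  refine ⟨K, max c 1, T, hK, le_max_right _ _, max_lt hcK hK, (hT T le_rfl).2.2, fun t ht => ?_⟩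
  obtain ⟨hft, hratio, -⟩ := hT t ht
  calc f (K ^ γ * t) ≤ c * f t := (div_le_iff₀ (by linarith)).mp hratio
    _ ≤ max c 1 * f t := mul_le_mul_of_nonneg_right (le_max_left _ _) (by linarith)

lemma le_pow_mul_of_le_mul {f : ℝ → ℝ} {a c X : ℝ} (ha : 1 ≤ a) (hc : 0 ≤ c) (hX : 0 ≤ X)
    (hstep : ∀ x, X ≤ x → f (a * x) ≤ c * f x) (n : ℕ) {x : ℝ} (hx : X ≤ x) :
    f (a ^ n * x) ≤ c ^ n * f x := by
  induction n with
  | zero => simp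
  | succ n ih =>
    have hXn : X ≤ a ^ n * x := hx.trans (le_mul_of_one_le_left (hX.trans hx) (one_le_pow₀ ha))
    calc f (a ^ (n + 1) * x) = f (a * (a ^ n * x)) := by ring_nf
      _ ≤ c * f (a ^ n * x) := hstep _ hXn
      _ ≤ c * (c ^ n * f x) := by gcongr
      _ = c ^ (n + 1) * f x := by ring

/-- Iterating over the `⌊log t / log a⌋ + 1` steps needed to pass `t`. -/
lemma le_mul_rpow_of_le_mul {f : ℝ → ℝ} (hmono : MonotoneOn f (Ici 0))
    (hnn : ∀ x, 0 ≤ x → 0 ≤ f x) {a c X : ℝ} (ha : 1 < a) (hc : 1 ≤ c) (hX : 0 < X)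
    (hstep : ∀ x, X ≤ x → f (a * x) ≤ c * f x) {y t : ℝ} (hy : X ≤ y) (ht : 1 ≤ t) :
    f (y * t) ≤ c * f y * t ^ (Real.log c / Real.log a) := by
  have hla : 0 < Real.log a := Real.log_pos ha
  have ht0 : 0 < t := by linarith
  have hy0 : 0 < y := by linarith
  set n := ⌊Real.log t / Real.log a⌋₊
  have hta : t ≤ a ^ (n + 1) := by
    rw [← Real.log_le_log_iff ht0 (by positivity), Real.log_pow]
    have := (div_lt_iff₀ hla).mp (Nat.lt_floor_add_one (Real.log t / Real.log a))
    push_cast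
    linarith
  have hcn : c ^ n ≤ t ^ (Real.log c / Real.log a) := by
    have hn : (n : ℝ) * Real.log c ≤ Real.log t * (Real.log c / Real.log a) :=
      calc (n : ℝ) * Real.log c ≤ Real.log t / Real.log a * Real.log c :=
            mul_le_mul_of_nonneg_right
              (Nat.floor_le (div_nonneg (Real.log_nonneg ht) hla.le)) (Real.log_nonneg hc)
        _ = Real.log t * (Real.log c / Real.log a) := by ring
    calc c ^ n = Real.exp (n * Real.log c) := by
          rw [← Real.log_pow, Real.exp_log (by positivity)]
      _ ≤ t ^ (Real.log c / Real.log a) := by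
          rw [Real.rpow_def_of_pos ht0]; exact Real.exp_le_exp.mpr hn
  calc f (y * t) ≤ f (a ^ (n + 1) * y) :=
        hmono (by simp only [mem_Ici]; positivity) (by simp only [mem_Ici]; positivity)
          (by nlinarith)
    _ ≤ c ^ (n + 1) * f y := le_pow_mul_of_le_mul ha.le (by linarith) hX.le hstep _ hy
    _ = c * c ^ n * f y := by ring
    _ ≤ c * t ^ (Real.log c / Real.log a) * f y :=
        mul_le_mul_of_nonneg_right (mul_le_mul_of_nonneg_left hcn (by linarith)) (hnn y hy0.le)
    _ = c * f y * t ^ (Real.log c / Real.log a) := by ring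

/-- With `β = log c / log K ^ γ` we get `β γ = log c / log K < 1`. -/
lemma Pcond.exists_le_mul_rpow {f : ℝ → ℝ} {γ : ℝ} (hP : Pcond f γ)
    (hmono : MonotoneOn f (Ici 0)) (hnn : ∀ x, 0 ≤ x → 0 ≤ f x)
    (htend : Tendsto f atTop atTop) (hγ : 0 < γ) :
    ∃ C β X : ℝ, 0 < C ∧ 0 ≤ β ∧ β * γ < 1 ∧ 0 < X ∧
      ∀ y, X ≤ y → ∀ t, 1 ≤ t → f (y * t) ≤ C * f y * t ^ β := by
  obtain ⟨K, c, X, hK, hc, hcK, hX, hstep⟩ := hP.exists_le_mul htend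
  have hK0 : 0 < K := by linarith
  have hlK : 0 < Real.log K := Real.log_pos hK
  have hlKγ : Real.log (K ^ γ) = γ * Real.log K := Real.log_rpow hK0 γ
  have hKγ : 1 < K ^ γ := Real.one_lt_rpow hK hγ
  refine ⟨c, Real.log c / Real.log (K ^ γ), X, by linarith,
    div_nonneg (Real.log_nonneg hc) (Real.log_pos hKγ).le, ?_, hX,
    fun y hy t ht => le_mul_rpow_of_le_mul hmono hnn hKγ hc hX hstep hy ht⟩
  rw [hlKγ, div_mul_eq_mul_div, div_lt_one (by positivity), mul_comm γ]
  exact mul_lt_mul_of_pos_right (Real.log_lt_log (by linarith) hcK) hγ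

lemma isLittleO_rpow_id_atTop {β : ℝ} (hβ : β < 1) :
    (fun t : ℝ => t ^ β) =o[atTop] fun t => t := by
  rw [isLittleO_iff_tendsto' ((eventually_ne_atTop 0).mono fun t ht h => absurd h ht)]
  refine (tendsto_rpow_neg_atTop (by linarith : 0 < 1 - β)).congr' ?_
  filter_upwards [eventually_gt_atTop 0] with t ht
  rw [neg_sub, Real.rpow_sub_one ht.ne']

lemma exists_rpow_le_mul_add {β ε : ℝ} (hβ₀ : 0 ≤ β) (hβ : β < 1) (hε : 0 < ε) :
    ∃ C, ∀ r, 1 ≤ r → r ^ β ≤ ε * r + C := by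
  obtain ⟨R, hR⟩ := eventually_atTop.mp ((isLittleO_rpow_id_atTop hβ).def hε)
  refine ⟨max R 1 ^ β, fun r hr => ?_⟩
  rcases le_total r (max R 1) with h | h
  · have := Real.rpow_le_rpow (by linarith) h hβ₀
    nlinarith
  · have := hR r ((le_max_left _ _).trans h)
    rw [Real.norm_of_nonneg (by positivity), Real.norm_of_nonneg (by linarith)] at this
    have : 0 ≤ max R 1 ^ β := by positivity
    linarith

lemma Pcond.omega5 {f : ℝ → ℝ} {γ : ℝ} (hP : Pcond f γ) (hmono : MonotoneOn f (Ici 0))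
    (hnn : ∀ x, 0 ≤ x → 0 ≤ f x) (htend : Tendsto f atTop atTop) (hγ : 1 ≤ γ) : Omega5 f := by
  obtain ⟨C, β, X, hC, hβ₀, hβγ, hX, hbound⟩ :=
    hP.exists_le_mul_rpow hmono hnn htend (by linarith)
  have hβ : β < 1 := by nlinarith
  refine IsBigO.trans_isLittleO ?_ (isLittleO_rpow_id_atTop hβ)
  refine IsBigO.of_bound (C * f X / X ^ β) ?_
  filter_upwards [eventually_ge_atTop X] with t ht
  have ht0 : 0 < t := by linarith
  have key := hbound X le_rfl (t / X) ((one_le_div hX).mpr ht)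
  rw [mul_div_cancel₀ _ hX.ne', Real.div_rpow ht0.le hX.le] at key
  rw [Real.norm_of_nonneg (hnn t ht0.le), Real.norm_of_nonneg (by positivity)]
  calc f t ≤ C * f X * (t ^ β / X ^ β) := key
    _ = C * f X / X ^ β * t ^ β := by ring

lemma Pcond.omega1 {f : ℝ → ℝ} {γ : ℝ} (hP : Pcond f γ) (hmono : MonotoneOn f (Ici 0))
    (hnn : ∀ x, 0 ≤ x → 0 ≤ f x) (htend : Tendsto f atTop atTop) (hγ : 0 < γ) : Omega1 f := by
  obtain ⟨C, β, X, hC, -, -, hX, hbound⟩ := hP.exists_le_mul_rpow hmono hnn htend hγ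
  set L := max (max (C * 2 ^ β) (f (2 * X))) 1
  have hLC : C * 2 ^ β ≤ L := (le_max_left _ _).trans (le_max_left _ _)
  have hLX : f (2 * X) ≤ L := (le_max_right _ _).trans (le_max_left _ _)
  have hL : 1 ≤ L := le_max_right _ _
  refine ⟨L, hL, fun t ht => ?_⟩
  have hft := hnn t ht
  rcases le_total X t with h | h
  · have := hbound t h 2 one_le_two
    rw [mul_comm t] at this
    nlinarith [mul_le_mul_of_nonneg_right hLC hft]
  · have : f (2 * t) ≤ f (2 * X) :=
      hmono (by simp only [mem_Ici]; positivity) (by simp only [mem_Ici]; positivity) (by linarith)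
    nlinarith

/-- Integrating the bound `f (y t) ≤ C f(max y X) t ^ β` against `t⁻²` over `(1, ∞)`. -/
lemma Pcond.omegaSnq {f : ℝ → ℝ} {γ : ℝ} (hP : Pcond f γ) (hmono : MonotoneOn f (Ici 0))
    (hnn : ∀ x, 0 ≤ x → 0 ≤ f x) (htend : Tendsto f atTop atTop) (hγ : 1 ≤ γ) :
    OmegaSnq f := by
  obtain ⟨C, β, X, hC, hβ₀, hβγ, hX, hbound⟩ :=
    hP.exists_le_mul_rpow hmono hnn htend (by linarith)
  have hβ1 : β < 1 := by nlinarith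
  have hβ : β - 2 < -1 := by linarith
  have hfX := hnn X hX.le
  refine ⟨C / (1 - β) * (f X + 1), by positivity, fun y hy => ?_⟩
  set M := max y X
  have hM : 0 < M := lt_of_lt_of_le hX (le_max_right _ _)
  have hpoint : ∀ t ∈ Ioi (1 : ℝ),
      ENNReal.ofReal (f (y * t) / t ^ 2) ≤ ENNReal.ofReal (C * f M * t ^ (β - 2)) := by
    intro t (ht : 1 < t)
    have ht0 : 0 < t := by linarith
    refine ENNReal.ofReal_le_ofReal ?_
    rw [div_le_iff₀ (by positivity), Real.rpow_sub ht0, Real.rpow_two, mul_div_assoc',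
      div_mul_cancel₀ _ (by positivity)]
    exact (hmono (by simp only [mem_Ici]; positivity) (by simp only [mem_Ici]; positivity)
      (by gcongr; exact le_max_left _ _)).trans (hbound M (le_max_right _ _) t ht.le)
  have hint : IntegrableOn (fun t : ℝ => C * f M * t ^ (β - 2)) (Ioi 1) :=
    (integrableOn_Ioi_rpow_of_lt hβ one_pos).const_mul _
  have hval : ∫ t in Ioi (1 : ℝ), C * f M * t ^ (β - 2) = C / (1 - β) * f M := by
    rw [integral_const_mul, integral_Ioi_rpow_of_lt hβ one_pos, Real.one_rpow,
      show β - 2 + 1 = -(1 - β) by ring, div_neg, neg_div, neg_neg]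
    ring
  have hfM : f M ≤ f y + f X := by
    rcases max_choice y X with h | h <;> simp only [M, h] <;> linarith [hnn y hy.le]
  calc (∫⁻ t in Ioi (1 : ℝ), ENNReal.ofReal (f (y * t) / t ^ 2))
      ≤ ∫⁻ t in Ioi (1 : ℝ), ENNReal.ofReal (C * f M * t ^ (β - 2)) :=
        setLIntegral_mono' measurableSet_Ioi hpoint
    _ = ENNReal.ofReal (C / (1 - β) * f M) := by
        rw [← hval, ofReal_integral_eq_lintegral_ofReal hint]
        filter_upwards [ae_restrict_mem measurableSet_Ioi] with t (ht : 1 < t)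
        have := hnn M hM.le
        positivity
    _ ≤ ENNReal.ofReal (C / (1 - β) * (f X + 1) * (f y + 1)) := by
        refine ENNReal.ofReal_le_ofReal ?_
        have hD : 0 ≤ C / (1 - β) := by positivity
        nlinarith [mul_le_mul_of_nonneg_left hfM hD,
          mul_nonneg (mul_nonneg hD hfX) (hnn y hy.le)]

lemma IsWeightFunction.nonneg_s17 {ω : ℝ → ℝ} (hω : IsWeightFunction ω) (x : ℝ) (hx : 0 ≤ x) :
    0 ≤ ω x :=
  hω.map_zero ▸ hω.monotoneOn self_mem_Ici hx hx

lemma Omega5.bddAbove {ω : ℝ → ℝ} (h5 : Omega5 ω) (hω : IsWeightFunction ω) {s : ℝ}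
    (hs : 0 < s) : BddAbove ((fun t : ℝ => ω t - s * t) '' Ici 0) := by
  obtain ⟨T, hT⟩ := eventually_atTop.mp (h5.def hs)
  refine ⟨ω (max T 0), ?_⟩
  rintro _ ⟨u, hu : 0 ≤ u, rfl⟩
  have hωT := hω.nonneg_s17 _ (le_max_right T 0)
  rcases le_total u (max T 0) with h | h
  · have := hω.monotoneOn hu (le_max_right T 0 : (0 : ℝ) ≤ max T 0) h
    nlinarith
  · have := hT u ((le_max_left _ _).trans h)
    rw [Real.norm_of_nonneg (hω.nonneg_s17 u hu), Real.norm_of_nonneg hu] at this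
    linarith

section UpperConjIota

variable {ω : ℝ → ℝ}

lemma upperConjIota_le {x M : ℝ} (hx : 0 < x) (h : ∀ u, 0 ≤ u → ω u - u / x ≤ M) :
    upperConjIota ω x ≤ M := by
  rw [upperConjIota, if_neg hx.ne', upperConj]
  refine csSup_le ((nonempty_Ici).image _) ?_
  rintro _ ⟨u, hu : 0 ≤ u, rfl⟩
  simpa [div_eq_inv_mul] using h u hu

lemma le_upperConjIota_add (hω : IsWeightFunction ω) (h5 : Omega5 ω) {x u : ℝ} (hx : 0 < x)
    (hu : 0 ≤ u) : ω u ≤ upperConjIota ω x + u / x := by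
  rw [upperConjIota, if_neg hx.ne', upperConj]
  have := le_csSup (h5.bddAbove hω (one_div_pos.mpr hx)) ⟨u, hu, rfl⟩
  simp only [one_div_mul_eq_div] at this ⊢
  linarith

lemma upperConjIota_nonneg (hω : IsWeightFunction ω) (h5 : Omega5 ω) (x : ℝ) (hx : 0 ≤ x) :
    0 ≤ upperConjIota ω x := by
  rcases hx.eq_or_lt with rfl | hx
  · simp [upperConjIota]
  · simpa [hω.map_zero] using le_upperConjIota_add hω h5 hx le_rfl

lemma upperConjIota_monotoneOn (hω : IsWeightFunction ω) (h5 : Omega5 ω) :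
    MonotoneOn (upperConjIota ω) (Ici 0) := by
  rintro x (hx : 0 ≤ x) y (hy : 0 ≤ y) hxy
  rcases hx.eq_or_lt with rfl | hx
  · simpa [upperConjIota] using upperConjIota_nonneg hω h5 y hy
  refine upperConjIota_le hx fun u hu => ?_
  have := le_upperConjIota_add hω h5 (hx.trans_le hxy) hu
  have : u / y ≤ u / x := div_le_div_of_nonneg_left hu hx hxy
  linarith

lemma tendsto_upperConjIota (hω : IsWeightFunction ω) (h5 : Omega5 ω) :
    Tendsto (upperConjIota ω) atTop atTop := by
  refine tendsto_atTop.mpr fun M => ?_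
  obtain ⟨u, hu⟩ := eventually_atTop.mp
    ((hω.tendsto_atTop.eventually_ge_atTop (M + 1)).and (eventually_ge_atTop 0))
  filter_upwards [eventually_ge_atTop (max u 1)] with x hx
  have hx0 : 0 < x := one_pos.trans_le ((le_max_right _ _).trans hx)
  have := le_upperConjIota_add hω h5 hx0 (hu u le_rfl).2
  have : u / x ≤ 1 := (div_le_one hx0).mpr ((le_max_left _ _).trans hx)
  linarith [(hu u le_rfl).1]

lemma Pcond.upperConjIota_sub_one {γ : ℝ} (hP : Pcond ω γ) (hω : IsWeightFunction ω)
    (h5 : Omega5 ω) :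
    Pcond (upperConjIota ω) (γ - 1) := by
  obtain ⟨K, c, T, hK, hc, hcK, hT, hstep⟩ := hP.exists_le_mul hω.tendsto_atTop
  have hK0 : 0 < K := by linarith
  have hKγ : 0 < K ^ γ := Real.rpow_pos_of_pos hK0 γ
  set B := ω (K ^ γ * T)
  have key : ∀ x, 0 < x →
      upperConjIota ω (K ^ (γ - 1) * x) ≤ max (c * upperConjIota ω x) B := by
    intro x hx
    refine upperConjIota_le (by positivity) fun u hu => ?_
    rcases le_total u (K ^ γ * T) with h | h
    · have : ω u ≤ B := hω.monotoneOn hu (by simp only [mem_Ici]; positivity) h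
      have : 0 ≤ u / (K ^ (γ - 1) * x) := by positivity
      exact le_max_of_le_right (by linarith)
    obtain ⟨v, rfl⟩ : ∃ v, u = K ^ γ * v := ⟨u / K ^ γ, by field_simp⟩
    have hv : T ≤ v := le_of_mul_le_mul_left h hKγ
    have hcx : 0 < c * x / K := by positivity
    have hslope : K ^ γ * v / (K ^ (γ - 1) * x) = c * (v / (c * x / K)) := by
      rw [Real.rpow_sub_one hK0.ne']
      field_simp
    have h1 := le_upperConjIota_add hω h5 hcx (hT.le.trans hv)
    have h2 : upperConjIota ω (c * x / K) ≤ upperConjIota ω x :=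
      upperConjIota_monotoneOn hω h5 hcx.le hx.le
        ((div_le_iff₀ hK0).mpr (mul_comm x K ▸ mul_le_mul_of_nonneg_right hcK.le hx.le))
    refine le_max_of_le_left ?_
    rw [hslope]
    nlinarith [hstep v hv]
  refine ⟨K, hK, c, hcK, ?_⟩
  filter_upwards [(tendsto_upperConjIota hω h5).eventually_ge_atTop (max B 1),
    eventually_gt_atTop 0] with x hBx hx
  have hσ : 0 < upperConjIota ω x := one_pos.trans_le ((le_max_right _ _).trans hBx)
  rw [div_le_iff₀ hσ]
  refine (key x hx).trans (max_le le_rfl ?_)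
  nlinarith [le_max_left B 1]

lemma upperConjIota_two_mul_div_le {γ : ℝ} (hP : Pcond ω γ) (hω : IsWeightFunction ω)
    (hγ : 1 ≤ γ) :
    ∃ C, ∀ᶠ t in atTop, upperConjIota ω (2 * t / ω t) ≤ C * ω t := by
  obtain ⟨C₀, β, X, hC₀, hβ₀, hβγ, hX, hbound⟩ :=
    hP.exists_le_mul_rpow hω.monotoneOn hω.nonneg_s17 hω.tendsto_atTop (by linarith)
  obtain ⟨C', hC'⟩ :=
    exists_rpow_le_mul_add hβ₀ (by nlinarith) (by positivity : 0 < 1 / (2 * C₀))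
  refine ⟨max 1 (C₀ * C'), ?_⟩
  filter_upwards [eventually_ge_atTop X, hω.tendsto_atTop.eventually_gt_atTop 0]
    with t ht hωt
  have ht0 : 0 < t := hX.trans_le ht
  refine upperConjIota_le (by positivity) fun u hu => ?_
  rcases le_total u t with h | h
  · have : ω u ≤ ω t := hω.monotoneOn hu ht0.le h
    have : 0 ≤ u / (2 * t / ω t) := by positivity
    nlinarith [le_max_left 1 (C₀ * C')]
  obtain ⟨r, hr, rfl⟩ : ∃ r, 1 ≤ r ∧ u = t * r :=
    ⟨u / t, (one_le_div ht0).mpr h, by field_simp⟩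
  have hlin : t * r / (2 * t / ω t) = ω t * r / 2 := by field_simp
  have h1 : C₀ * r ^ β ≤ r / 2 + C₀ * C' := by
    calc C₀ * r ^ β ≤ C₀ * (1 / (2 * C₀) * r + C') :=
          mul_le_mul_of_nonneg_left (hC' r hr) hC₀.le
      _ = r / 2 + C₀ * C' := by field_simp
  rw [hlin]
  nlinarith [hbound t ht r hr, mul_le_mul_of_nonneg_left h1 hωt.le,
    mul_le_mul_of_nonneg_right (le_max_right 1 (C₀ * C')) hωt.le]

lemma Pcond.of_upperConjIota {γ₀ γ : ℝ} (hP : Pcond (upperConjIota ω) γ) (hγ : 0 < γ)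
    (hω : IsWeightFunction ω) (h5 : Omega5 ω) (hP₀ : Pcond ω γ₀) (hγ₀ : 1 ≤ γ₀) :
    Pcond ω (γ + 1) := by
  obtain ⟨C₁, hC₁⟩ := upperConjIota_two_mul_div_le hP₀ hω hγ₀
  obtain ⟨C₂, β, X, hC₂, hβ₀, hβγ, hX, hbound⟩ := hP.exists_le_mul_rpow
    (upperConjIota_monotoneOn hω h5) (upperConjIota_nonneg hω h5)
    (tendsto_upperConjIota hω h5) hγ
  obtain ⟨L, hL, hL1⟩ :=
    ((((isLittleO_rpow_id_atTop (by linarith : γ * β < 1)).const_mul_left (C₂ * C₁)).def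
      (by norm_num : (0 : ℝ) < 1 / 4)).and (eventually_gt_atTop 1)).exists
  rw [Real.norm_of_nonneg (by linarith : 0 ≤ L)] at hL
  have hLα := (le_abs_self _).trans hL
  refine ⟨L, hL1, C₂ * C₁ * L ^ (γ * β) + L / 2, by linarith, ?_⟩
  filter_upwards [hC₁, hω.tendsto_atTop.eventually_gt_atTop 0,
    h5.def (by positivity : 0 < 2 / X), eventually_gt_atTop 0] with t hσt hωt hsmall ht
  rw [Real.norm_of_nonneg hωt.le, Real.norm_of_nonneg ht.le] at hsmall
  set x := 2 * t / ω t
  have hXx : X ≤ x := by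
    rw [le_div_iff₀ hωt]
    nlinarith [mul_le_mul_of_nonneg_left hsmall hX.le, mul_div_cancel₀ (2 : ℝ) hX.ne']
  have hLγ : 1 ≤ L ^ γ := Real.one_le_rpow hL1.le hγ.le
  have h1 := le_upperConjIota_add hω h5 (by positivity : 0 < x * L ^ γ)
    (by positivity : 0 ≤ L ^ (γ + 1) * t)
  have h2 := hbound x hXx (L ^ γ) hLγ
  rw [← Real.rpow_mul (by linarith)] at h2
  have h3 : L ^ (γ + 1) * t / (x * L ^ γ) = L / 2 * ω t := by
    simp only [x]
    rw [Real.rpow_add_one (by linarith)]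
    field_simp
  rw [div_le_iff₀ hωt]
  nlinarith [mul_le_mul_of_nonneg_right (mul_le_mul_of_nonneg_left hσt hC₂.le)
    (Real.rpow_nonneg (by linarith : 0 ≤ L) (γ * β))]

end UpperConjIota

lemma exists_pcond_of_lt_gammaIndex {f : ℝ → ℝ} {x : ENNReal} (h : x < gammaIndex f) :
    ∃ γ : ℝ, 0 < γ ∧ Pcond f γ ∧ x < ENNReal.ofReal γ := by
  simp only [gammaIndex, lt_iSup_iff] at h
  obtain ⟨γ, ⟨hγ, hP⟩, hx⟩ := h
  exact ⟨γ, hγ, hP, hx⟩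

lemma ofReal_le_gammaIndex {f : ℝ → ℝ} {γ : ℝ} (hγ : 0 < γ) (hP : Pcond f γ) :
    ENNReal.ofReal γ ≤ gammaIndex f :=
  le_iSup₂ (f := fun γ (_ : γ ∈ {γ : ℝ | 0 < γ ∧ Pcond f γ}) => ENNReal.ofReal γ) γ ⟨hγ, hP⟩

lemma gammaIndex_le_add_one {f g : ℝ → ℝ} (h : ∀ γ, 1 < γ → Pcond f γ → Pcond g (γ - 1)) :
    gammaIndex f ≤ gammaIndex g + 1 := by
  refine iSup₂_le fun γ ⟨hγ, hP⟩ => ?_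
  rcases le_or_gt γ 1 with h1 | h1
  · exact (ENNReal.ofReal_le_of_le_toReal (by simpa using h1)).trans le_add_self
  · calc ENNReal.ofReal γ = ENNReal.ofReal (γ - 1) + 1 := by
          rw [← ENNReal.ofReal_one, ← ENNReal.ofReal_add (by linarith) zero_le_one,
            sub_add_cancel]
      _ ≤ gammaIndex g + 1 := by gcongr; exact ofReal_le_gammaIndex (by linarith) (h γ h1 hP)

lemma add_one_le_gammaIndex {f g : ℝ → ℝ} (hf : 1 ≤ gammaIndex f)
    (h : ∀ γ, 0 < γ → Pcond g γ → Pcond f (γ + 1)) : gammaIndex g + 1 ≤ gammaIndex f := by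
  rcases {γ : ℝ | 0 < γ ∧ Pcond g γ}.eq_empty_or_nonempty with hS | hS
  · simpa [gammaIndex, hS] using hf
  rw [gammaIndex, ENNReal.biSup_add hS]
  refine iSup₂_le fun γ ⟨hγ, hP⟩ => ?_
  rw [← ENNReal.ofReal_one, ← ENNReal.ofReal_add hγ.le zero_le_one]
  exact ofReal_le_gammaIndex (by linarith) (h γ hγ hP)

/-- Lemma on the upper conjugate: if `γ(ω) > 1` then `ω` has
`(ω₅)` (so `ω⋆(s) < ∞` for every `s > 0`), `(ω⋆)^ι` has `(ω₁)`, and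
`γ(ω) = γ((ω⋆)^ι) + 1`; in particular `γ(ω) > 2` implies `(ω_snq)` for `(ω⋆)^ι`. -/
theorem gammaIndex_upperConjIota
    (ω : ℝ → ℝ) (hω : IsWeightFunction ω) (hγ : 1 < gammaIndex ω) :
    Omega5 ω ∧
    (∀ s : ℝ, 0 < s → BddAbove ((fun t : ℝ => ω t - s * t) '' Set.Ici 0)) ∧
    Omega1 (upperConjIota ω) ∧
    gammaIndex ω = gammaIndex (upperConjIota ω) + 1 ∧
    (2 < gammaIndex ω → OmegaSnq (upperConjIota ω)) := by
  obtain ⟨γ₀, -, hP₀, h1γ₀⟩ := exists_pcond_of_lt_gammaIndex hγ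
  have hγ₀ : 1 < γ₀ := ENNReal.one_lt_ofReal.mp h1γ₀
  have h5 : Omega5 ω := hP₀.omega5 hω.monotoneOn hω.nonneg_s17 hω.tendsto_atTop hγ₀.le
  have hσmono := upperConjIota_monotoneOn hω h5
  have hσnn := upperConjIota_nonneg hω h5
  have hσtend := tendsto_upperConjIota hω h5
  refine ⟨h5, fun s hs => h5.bddAbove hω hs,
    (hP₀.upperConjIota_sub_one hω h5).omega1 hσmono hσnn hσtend (by linarith),
    le_antisymm (gammaIndex_le_add_one fun γ _ hP => hP.upperConjIota_sub_one hω h5)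
      (add_one_le_gammaIndex hγ.le fun γ hγ hP => hP.of_upperConjIota hγ hω h5 hP₀ hγ₀.le),
    fun h2 => ?_⟩
  obtain ⟨γ, -, hP, h2γ⟩ := exists_pcond_of_lt_gammaIndex h2
  rw [← ENNReal.ofReal_ofNat 2, ENNReal.ofReal_lt_ofReal_iff_of_nonneg zero_le_two] at h2γ
  exact (hP.upperConjIota_sub_one hω h5).omegaSnq hσmono hσnn hσtend (by linarith)
end
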